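/- arXiv:2301.00778 — 2 statements merged into one kernel-verified Lean document; each statement's English description precedes it below -/
import Mathlib

section
/- Triangular dependence of π⁻ with respect to the ordering ≺ (property (ks05)): Fix a multi-index β and ξ ∈ ℝ. Let π, π'', ρ, ρ'' ∈ ℝ[[z_k,z_n]] and c, d ∈ ℝ[[z_k]] be such that π_γ = ρ_γ, π''_γ = ρ''_γ and c_γ = d_γ for every multi-index γ with γ ≺ β. Then, with π⁻(π,π'',c,ξ) := Σ_{k≥0} z_k π^k π'' − Σ_{l≥0} (1/l!) π^l (D⁽⁰⁾)^l c + ξ 𝟙, one has π⁻(π,π'',c,ξ)_β + c_β = π⁻(ρ,ρ'',d,ξ)_β + d_β; that is, the β-component of π⁻ apart from the explicit counterterm −c_β depends on (π, π'', c) only through components indexed by multi-indices preceding β. -/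
open MvPowerSeries

noncomputable section

/-- Indices `n ∈ ℕ² \ {(0,0)}` for the variables `z_n`. -/
abbrev Pos2 : Type := {p : ℕ × ℕ // p ≠ (0, 0)}

/-- The variables: `z_k` for `k ∈ ℕ` (left) and `z_n` for `n ∈ ℕ²\{0}` (right). -/
abbrev Var : Type := ℕ ⊕ Pos2

/-- Multi-indices: finitely supported functions from the variables to ℕ. -/
abbrev MIdx : Type := Var →₀ ℕ

/-- The algebra ℝ[[z_k, z_n]] of formal power series. -/
abbrev FPS : Type := MvPowerSeries Var ℝ

/-- The variable `z_k` as a power series. -/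
def zk (k : ℕ) : FPS := MvPowerSeries.X (Sum.inl k)

/-- The variable `z_n` as a power series. -/
def zn (n : Pos2) : FPS := MvPowerSeries.X (Sum.inr n)

/-- The derivation `D⁽⁰⁾ = Σ_k (k+1) z_{k+1} ∂_{z_k}`, defined componentwise by
`(D⁽⁰⁾π)_β = Σ_{k, β(k+1) ≥ 1} (k+1)(β(k)+1) π_{β + e_k - e_{k+1}}`. -/
def Dzero (π : FPS) : FPS := fun β =>
  ∑ j ∈ β.support,
    (match j with
     | Sum.inl (k + 1) =>
         ((k : ℝ) + 1) * ((β (Sum.inl k) : ℝ) + 1) *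
           MvPowerSeries.coeff (R := ℝ)
             (β + Finsupp.single (Sum.inl k) 1 - Finsupp.single (Sum.inl (k + 1)) 1) π
     | _ => 0)

/-- `c ∈ ℝ[[z_k]]`: the subalgebra of series with no `z_n`-dependence. -/
def OnlyZk (c : FPS) : Prop :=
  ∀ β : MIdx, (∃ n : Pos2, β (Sum.inr n) ≠ 0) → MvPowerSeries.coeff (R := ℝ) β c = 0

/-- `[β] := Σ_k k β(k) − Σ_n β(n)`. -/
def bracketZ (β : MIdx) : ℤ :=
  β.sum fun j m => (match j with | Sum.inl k => (k : ℤ) | Sum.inr _ => -1) * (m : ℤ)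

/-- `|β|_p := Σ_n |n| β(n)` where `|n| = n₁ + 2 n₂`. -/
def homP (β : MIdx) : ℝ :=
  β.sum fun j m =>
    (match j with | Sum.inl _ => (0 : ℝ) | Sum.inr n => (n.val.1 : ℝ) + 2 * n.val.2) * (m : ℝ)

/-- The homogeneity `|β| := α (1 + [β]) + |β|_p`. -/
def hom (α : ℝ) (β : MIdx) : ℝ := α * (1 + (bracketZ β : ℝ)) + homP β

/-- `|β|_≺ := |β| + λ β(0)`; the ordering is `γ ≺ β iff |γ|_≺ < |β|_≺`. -/
def ordP (α lam : ℝ) (β : MIdx) : ℝ := hom α β + lam * (β (Sum.inl 0) : ℝ)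

/-- `π⁻ := Σ_{k≥0} z_k π^k π'' − Σ_{l≥0} (1/l!) π^l (D⁽⁰⁾)^l c + ξ 𝟙`, defined
componentwise (all sums are componentwise finite). -/
def piminus (π π'' c : FPS) (ξ : ℝ) : FPS := fun β =>
  (∑ᶠ k : ℕ, MvPowerSeries.coeff (R := ℝ) β (zk k * π ^ k * π''))
    - (∑ᶠ l : ℕ, ((l.factorial : ℝ))⁻¹ * MvPowerSeries.coeff (R := ℝ) β (π ^ l * Dzero^[l] c))
    + ξ * MvPowerSeries.coeff (R := ℝ) β 1

/-!
Put `w(β) := |β|_≺ - α`. It is additive in `β`, `w(β) = Σ_v β(v) w(v)`, every variable has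
positive weight (`λ > 0` for `z_0`, `α k` for `z_k`, `k ≥ 1`, `|n| - α ≥ 1 - α` for `z_n`), and trading
`z_{k+1}` for `z_k` lowers the weight (by `α`, or by `α - λ` when `k = 0`). Consequently agreement
of two series strictly below a weight level is preserved by products and by `D⁽⁰⁾`, while the
coefficient of `z_k f` at `β` only sees `f` strictly below `w(β)`. In
`(π^l (D⁽⁰⁾)^l c)_β` with `l ≥ 1` the factor `π^l` is evaluated strictly below `w(β)`, since
`(D⁽⁰⁾)^l c` vanishes at the zero multi-index; only the term `l = 0`, which is `c_β`, sees `c` at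
`β` itself. The sum over `l` is finite because `D⁽⁰⁾` lowers `Σ_k k β(k)` by one.
-/

open Finsupp

lemma weight_add_single_sub_single {σ M : Type*} [AddCommMonoid M] (w : σ → M) {n : σ →₀ ℕ}
    {i j : σ} (h : n j ≠ 0) : weight w (n + single i 1 - single j 1) + w j = weight w n + w i := by
  rw [weight_sub_single_add (by simp [h]), map_add, weight_single, one_smul]

section Agreement

variable {σ R : Type*} [CommSemiring R] {w : σ → ℝ}

def AgreeBelow (w : σ → ℝ) (b : ℝ) (f g : MvPowerSeries σ R) : Prop :=
  ∀ n, weight w n < b → coeff n f = coeff n g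

lemma weight_nonneg (hw : ∀ i, 0 ≤ w i) (n : σ →₀ ℕ) : 0 ≤ weight w n :=
  Finset.sum_nonneg fun i _ => nsmul_nonneg (hw i) _

lemma weight_pos (hw : ∀ i, 0 < w i) {n : σ →₀ ℕ} (hn : n ≠ 0) : 0 < weight w n := by
  obtain ⟨i, hi⟩ := Finsupp.ne_iff.mp hn
  exact (hw i).trans_le (le_weight_of_ne_zero (fun j => (hw j).le) hi)

lemma AgreeBelow.mul {b : ℝ} {f g f' g' : MvPowerSeries σ R} (hw : ∀ i, 0 ≤ w i)
    (h : AgreeBelow w b f g) (h' : AgreeBelow w b f' g') : AgreeBelow w b (f * f') (g * g') := by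
  classical
  intro n hn
  rw [coeff_mul, coeff_mul]
  refine Finset.sum_congr rfl fun p hp => ?_
  have hsum : weight w p.1 + weight w p.2 = weight w n := by
    rw [← map_add, Finset.HasAntidiagonal.mem_antidiagonal.mp hp]
  rw [h _ (by linarith [weight_nonneg hw p.2]), h' _ (by linarith [weight_nonneg hw p.1])]

lemma AgreeBelow.pow {b : ℝ} {f g : MvPowerSeries σ R} (hw : ∀ i, 0 ≤ w i)
    (h : AgreeBelow w b f g) (k : ℕ) : AgreeBelow w b (f ^ k) (g ^ k) := by
  induction k with
  | zero => exact fun _ _ => rfl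
  | succ k ih => rw [pow_succ, pow_succ]; exact ih.mul hw h

lemma coeff_X_mul_eq_of_agreeBelow {i : σ} {n : σ →₀ ℕ} {f g : MvPowerSeries σ R}
    (hw : 0 < w i) (h : AgreeBelow w (weight w n) f g) :
    coeff n (X i * f) = coeff n (X i * g) := by
  rw [X_def, coeff_monomial_mul, coeff_monomial_mul]
  split_ifs with hle
  · refine congrArg _ (h _ ?_)
    have := congrArg (weight w) (tsub_add_cancel_of_le hle)
    rw [map_add, weight_single, one_smul] at this
    linarith
  · rfl

end Agreement

section Derivation

lemma coeff_Dzero_congr {δ : MIdx} {c d : FPS}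
    (h : ∀ k, δ (Sum.inl (k + 1)) ≠ 0 →
      coeff (δ + single (Sum.inl k) 1 - single (Sum.inl (k + 1)) 1) c =
        coeff (δ + single (Sum.inl k) 1 - single (Sum.inl (k + 1)) 1) d) :
    coeff δ (Dzero c) = coeff δ (Dzero d) := by
  rw [coeff_apply, coeff_apply]
  refine Finset.sum_congr rfl fun j hj => ?_
  rcases j with (_ | k) | n
  · rfl
  · simp only [h k (mem_support_iff.mp hj)]
  · rfl

lemma Dzero_zero : Dzero 0 = 0 := by
  ext δ
  rw [coeff_apply]
  refine Finset.sum_eq_zero fun j _ => ?_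
  rcases j with (_ | k) | n
  · rfl
  · exact mul_eq_zero_of_right _ (map_zero _)
  · rfl

def zkDegree : Var → ℕ := Sum.elim (fun k => k) fun _ => 0

lemma coeff_iterate_Dzero_eq_zero (c : FPS) {l : ℕ} {δ : MIdx} (h : weight zkDegree δ < l) :
    coeff δ (Dzero^[l] c) = 0 := by
  induction l generalizing δ with
  | zero => exact absurd h (Nat.not_lt_zero _)
  | succ l ih =>
    rw [Function.iterate_succ_apply', ← map_zero (coeff δ), ← Dzero_zero]
    refine coeff_Dzero_congr fun k hk => ih ?_
    have : weight zkDegree (δ + single (Sum.inl k) 1 - single (Sum.inl (k + 1)) 1) + (k + 1) =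
        weight zkDegree δ + k := weight_add_single_sub_single zkDegree hk
    omega

lemma coeff_mul_iterate_Dzero_eq_zero (f c : FPS) {l : ℕ} {β : MIdx}
    (h : weight zkDegree β < l) : coeff β (f * Dzero^[l] c) = 0 := by
  classical
  rw [coeff_mul]
  refine Finset.sum_eq_zero fun p hp => mul_eq_zero_of_right _ (coeff_iterate_Dzero_eq_zero c ?_)
  have := congrArg (weight zkDegree) (Finset.HasAntidiagonal.mem_antidiagonal.mp hp)
  rw [map_add] at this
  omega

lemma finsum_coeff_pow_mul_iterate_Dzero (π c : FPS) (β : MIdx) :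
    ∑ᶠ l : ℕ, ((l.factorial : ℝ))⁻¹ * coeff β (π ^ l * Dzero^[l] c) =
      coeff β c + ∑ l ∈ Finset.range (weight zkDegree β),
        (((l + 1).factorial : ℝ))⁻¹ * coeff β (π ^ (l + 1) * Dzero^[l + 1] c) := by
  rw [finsum_eq_finsetSum_of_support_subset (s := Finset.range (weight zkDegree β + 1)),
    Finset.sum_range_succ', add_comm]
  · simp
  · intro l hl
    by_contra hl'
    simp only [Finset.coe_range, Set.mem_Iio, not_lt] at hl'
    exact hl (mul_eq_zero_of_right _ (coeff_mul_iterate_Dzero_eq_zero _ _ (by omega)))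

variable {w : Var → ℝ}

lemma coeff_Dzero_eq_of_agreeBelow (hwD : ∀ k, w (Sum.inl k) < w (Sum.inl (k + 1))) {b : ℝ}
    {c d : FPS} (h : AgreeBelow w b c d) {δ : MIdx} (hδ : weight w δ ≤ b) :
    coeff δ (Dzero c) = coeff δ (Dzero d) :=
  coeff_Dzero_congr fun k hk => h _ <| by
    linarith [weight_add_single_sub_single w (i := Sum.inl k) hk, hwD k]

lemma AgreeBelow.iterate_Dzero (hwD : ∀ k, w (Sum.inl k) < w (Sum.inl (k + 1))) {b : ℝ}
    {c d : FPS} (h : AgreeBelow w b c d) (l : ℕ) : AgreeBelow w b (Dzero^[l] c) (Dzero^[l] d) := by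
  induction l with
  | zero => exact h
  | succ l ih =>
    intro δ hδ
    rw [Function.iterate_succ_apply', Function.iterate_succ_apply']
    exact coeff_Dzero_eq_of_agreeBelow hwD ih hδ.le

lemma coeff_pow_mul_iterate_Dzero_congr (hw : ∀ i, 0 < w i)
    (hwD : ∀ k, w (Sum.inl k) < w (Sum.inl (k + 1))) {β : MIdx} {π ρ c d : FPS}
    (hπ : AgreeBelow w (weight w β) π ρ) (hc : AgreeBelow w (weight w β) c d) (l : ℕ) :
    coeff β (π ^ (l + 1) * Dzero^[l + 1] c) = coeff β (ρ ^ (l + 1) * Dzero^[l + 1] d) := by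
  classical
  rw [coeff_mul, coeff_mul]
  refine Finset.sum_congr rfl fun p hp => ?_
  have hsum : weight w p.1 + weight w p.2 = weight w β := by
    rw [← map_add, Finset.HasAntidiagonal.mem_antidiagonal.mp hp]
  rcases eq_or_ne p.2 0 with h0 | h0
  · rw [h0, coeff_iterate_Dzero_eq_zero c (by simp), coeff_iterate_Dzero_eq_zero d (by simp),
      mul_zero, mul_zero]
  · have hπp := (hπ.pow (fun i => (hw i).le) (l + 1)) p.1 (by linarith [weight_pos hw h0])
    rw [hπp, Function.iterate_succ_apply', Function.iterate_succ_apply',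
      coeff_Dzero_eq_of_agreeBelow hwD (hc.iterate_Dzero hwD l)
        (by linarith [weight_nonneg (fun i => (hw i).le) p.1])]

end Derivation

def varWeight (α lam : ℝ) : Var → ℝ :=
  Sum.elim (fun k => α * k + if k = 0 then lam else 0) fun n => n.1.1 + 2 * n.1.2 - α

lemma ordP_eq_add_weight (α lam : ℝ) (β : MIdx) :
    ordP α lam β = α + weight (varWeight α lam) β := by
  have hlam : lam * (β (Sum.inl 0) : ℝ) = weight (Pi.single (Sum.inl 0) lam) β := by
    rw [weight_single_index, nsmul_eq_mul, mul_comm]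
  rw [ordP, hom, hlam]
  simp only [bracketZ, homP, weight_apply, Finsupp.sum]
  push_cast
  rw [mul_add, mul_one, Finset.mul_sum, add_assoc, add_assoc, ← Finset.sum_add_distrib,
    ← Finset.sum_add_distrib]
  congr 1
  refine Finset.sum_congr rfl fun j _ => ?_
  rcases j with (_ | k) | n <;> simp [varWeight] <;> ring

lemma varWeight_pos {α lam : ℝ} (hα0 : 0 < α) (hα1 : α < 1) (hlam0 : 0 < lam) (i : Var) :
    0 < varWeight α lam i := by
  rcases i with (_ | k) | ⟨⟨n₁, n₂⟩, hn⟩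
  · simpa [varWeight] using hlam0
  · simp only [varWeight, Sum.elim_inl]
    positivity
  · have : 1 ≤ n₁ + 2 * n₂ := by
      rcases Nat.eq_zero_or_pos n₁ with rfl | h <;> simp_all <;> omega
    simp only [varWeight, Sum.elim_inr]
    have : (1 : ℝ) ≤ n₁ + 2 * n₂ := by exact_mod_cast this
    linarith

lemma varWeight_inl_lt_succ {α lam : ℝ} (hα0 : 0 < α) (hlam : lam < α) (k : ℕ) :
    varWeight α lam (Sum.inl k) < varWeight α lam (Sum.inl (k + 1)) := by
  rcases k with _ | k <;> simp [varWeight] <;> linarith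

lemma agreeBelow_of_ordP_lt {α lam : ℝ} {β : MIdx} {f g : FPS}
    (h : ∀ γ : MIdx, ordP α lam γ < ordP α lam β → coeff γ f = coeff γ g) :
    AgreeBelow (varWeight α lam) (weight (varWeight α lam) β) f g := fun γ hγ =>
  h γ (by rw [ordP_eq_add_weight, ordP_eq_add_weight]; linarith)

theorem stmt_11_general (α lam : ℝ) (hα0 : 0 < α) (hα1 : α < 1) (hlam0 : 0 < lam) (hlam : lam < α)
    (β : MIdx) (ξ : ℝ) (π π'' ρ ρ'' c d : FPS)
    (h1 : ∀ γ : MIdx, ordP α lam γ < ordP α lam β →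
      MvPowerSeries.coeff (R := ℝ) γ π = MvPowerSeries.coeff (R := ℝ) γ ρ)
    (h2 : ∀ γ : MIdx, ordP α lam γ < ordP α lam β →
      MvPowerSeries.coeff (R := ℝ) γ π'' = MvPowerSeries.coeff (R := ℝ) γ ρ'')
    (h3 : ∀ γ : MIdx, ordP α lam γ < ordP α lam β →
      MvPowerSeries.coeff (R := ℝ) γ c = MvPowerSeries.coeff (R := ℝ) γ d) :
    MvPowerSeries.coeff (R := ℝ) β (piminus π π'' c ξ) + MvPowerSeries.coeff (R := ℝ) β c
      = MvPowerSeries.coeff (R := ℝ) β (piminus ρ ρ'' d ξ) + MvPowerSeries.coeff (R := ℝ) β d := by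
  have hw := varWeight_pos hα0 hα1 hlam0
  have hwD := varWeight_inl_lt_succ hα0 hlam
  have hπ := agreeBelow_of_ordP_lt h1
  have hzk : ∀ k, coeff β (zk k * π ^ k * π'') = coeff β (zk k * ρ ^ k * ρ'') := fun k => by
    rw [mul_assoc, mul_assoc]
    exact coeff_X_mul_eq_of_agreeBelow (hw _)
      ((hπ.pow (fun i => (hw i).le) k).mul (fun i => (hw i).le) (agreeBelow_of_ordP_lt h2))
  have hcounter : ∀ l ∈ Finset.range (weight zkDegree β),
      (((l + 1).factorial : ℝ))⁻¹ * coeff β (π ^ (l + 1) * Dzero^[l + 1] c) =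
        (((l + 1).factorial : ℝ))⁻¹ * coeff β (ρ ^ (l + 1) * Dzero^[l + 1] d) := fun l _ => by
    rw [coeff_pow_mul_iterate_Dzero_congr hw hwD hπ (agreeBelow_of_ordP_lt h3)]
  change piminus π π'' c ξ β + _ = piminus ρ ρ'' d ξ β + _
  rw [piminus, piminus, finsum_coeff_pow_mul_iterate_Dzero, finsum_coeff_pow_mul_iterate_Dzero,
    finsum_congr hzk, Finset.sum_congr rfl hcounter]
  ring

/-- Triangular dependence of `π⁻` with respect to the ordering `≺` (property (ks05)):
if `(π, π'', c)` and `(ρ, ρ'', d)` agree on all components indexed by multi-indices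
`γ ≺ β`, then the `β`-components of `π⁻` apart from the explicit counterterm agree. -/
theorem stmt_11 (α lam : ℝ) (hα0 : 0 < α) (hα1 : α < 1) (hlam0 : 0 < lam) (hlam : lam < α)
    (β : MIdx) (ξ : ℝ) (π π'' ρ ρ'' c d : FPS) (hc : OnlyZk c) (hd : OnlyZk d)
    (h1 : ∀ γ : MIdx, ordP α lam γ < ordP α lam β →
      MvPowerSeries.coeff (R := ℝ) γ π = MvPowerSeries.coeff (R := ℝ) γ ρ)
    (h2 : ∀ γ : MIdx, ordP α lam γ < ordP α lam β →
      MvPowerSeries.coeff (R := ℝ) γ π'' = MvPowerSeries.coeff (R := ℝ) γ ρ'')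
    (h3 : ∀ γ : MIdx, ordP α lam γ < ordP α lam β →
      MvPowerSeries.coeff (R := ℝ) γ c = MvPowerSeries.coeff (R := ℝ) γ d) :
    MvPowerSeries.coeff (R := ℝ) β (piminus π π'' c ξ) + MvPowerSeries.coeff (R := ℝ) β c
      = MvPowerSeries.coeff (R := ℝ) β (piminus ρ ρ'' d ξ) + MvPowerSeries.coeff (R := ℝ) β d :=
  stmt_11_general α lam hα0 hα1 hlam0 hlam β ξ π π'' ρ ρ'' c d h1 h2 h3
end
end

section
/- Exponential formula on the subalgebra ℝ[[z_k]] (second item of (cw27)/(cw35)): Let q ∈ ℝ[[z_k,z_n]] and let Γ* be any row-finite unital algebra endomorphism of ℝ[[z_k,z_n]] (i.e. a linear map induced componentwise by a matrix ((Γ*)_β^γ) with, for each β, only finitely many γ such that (Γ*)_β^γ ≠ 0, which is multiplicative and fixes 𝟙) satisfying Γ* z_k = Σ_{l≥0} (k+l choose k) q^l z_{k+l} for every k ∈ ℕ. Then for every c ∈ ℝ[[z_k]], the sum Σ_{l≥0} (1/l!) q^l (D⁽⁰⁾)^l c is componentwise finite and Γ* c = Σ_{l≥0} (1/l!) q^l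 (D⁽⁰⁾)^l c. -/
open MvPowerSeries

noncomputable section

/-- Row-finiteness of a matrix indexed by pairs of multi-indices. -/
def RowFinite (Γ : MIdx → MIdx → ℝ) : Prop := ∀ β : MIdx, {γ : MIdx | Γ β γ ≠ 0}.Finite

/-- The linear map induced componentwise by a (row-finite) matrix. -/
def applyG (Γ : MIdx → MIdx → ℝ) (π : FPS) : FPS := fun β =>
  ∑ᶠ γ : MIdx, Γ β γ * MvPowerSeries.coeff (R := ℝ) γ π

/-- The prescribed image of `z_k`: `Σ_{l≥0} (k+l choose k) q^l z_{k+l}`, defined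
componentwise (only finitely many `l` contribute to each component). -/
def gammaZk (q : FPS) (k : ℕ) : FPS := fun β =>
  ∑ᶠ l : ℕ, (((k + l).choose k : ℝ)) * MvPowerSeries.coeff (R := ℝ) β (q ^ l * zk (k + l))

/-- The population condition `π⁽ⁿ⁾_β = 0 unless |n| < |β|`. -/
def PopCond (α : ℝ) (pin : ℕ × ℕ → FPS) : Prop :=
  ∀ (n : ℕ × ℕ) (β : MIdx),
    MvPowerSeries.coeff (R := ℝ) β (pin n) ≠ 0 → ((n.1 : ℝ) + 2 * n.2) < hom α β

/-- `Γ` is the re-expansion matrix associated to the family `{π⁽ⁿ⁾}_{n ∈ ℕ²}`: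
row-finite, the induced map is a unital algebra endomorphism, and it maps the
coordinates `z_k`, `z_n` as prescribed. -/
def IsReExpansion (pin : ℕ × ℕ → FPS) (Γ : MIdx → MIdx → ℝ) : Prop :=
  RowFinite Γ ∧
  (∀ π π' : FPS, applyG Γ (π * π') = applyG Γ π * applyG Γ π') ∧
  applyG Γ 1 = 1 ∧
  (∀ k : ℕ, applyG Γ (zk k) = gammaZk (pin (0, 0)) k) ∧
  (∀ n : Pos2, applyG Γ (zn n) = zn n + pin n.val)

/-! The derivation `D⁽⁰⁾` raises the weight `Σ_k k β(k)` of a multi-index by one, so the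
exponential sum `E c = Σ_l (1/l!) q^l (D⁽⁰⁾)^l c` is finite on every coefficient. Being the
exponential of a derivation, `E` is multiplicative (general Leibniz rule plus a Cauchy product),
it fixes `1`, and `E z_k = Σ_l (k+l choose k) q^l z_{k+l} = Γ* z_k` since
`(D⁽⁰⁾)^l z_k = (k+l)!/k! z_{k+l}`. Hence `Γ*` and `E` agree on every monomial in the `z_k`.
Finally, each coefficient of `Γ* c` and of `E c` is a finite linear combination of coefficients
of `c`, so agreement on monomials gives agreement on all of `ℝ[[z_k]]`. -/

open Finset

theorem Derivation.iterate_apply_mul {R A : Type*} [CommSemiring R] [CommSemiring A]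
    [Algebra R A] (D : Derivation R A A) (n : ℕ) (a b : A) :
    D^[n] (a * b) = ∑ ij ∈ antidiagonal n, n.choose ij.1 • (D^[ij.1] a * D^[ij.2] b) := by
  induction n with
  | zero => simp
  | succ n ih =>
    rw [sum_antidiagonal_choose_succ_nsmul (fun i j => D^[i] a * D^[j] b) n]
    simp only [Function.iterate_succ_apply', ih, map_sum, map_nsmul, Derivation.leibniz,
      smul_eq_mul, smul_add, sum_add_distrib]
    congr 1
    refine sum_congr rfl fun ij hij => ?_
    rw [n.choose_symm_of_eq_add (mem_antidiagonal.mp hij).symm, mul_comm]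

theorem Finset.sum_range_sum_antidiagonal_eq_sum_range_sum_range {M : Type*} [AddCommMonoid M]
    (N : ℕ) (f : ℕ → ℕ → M) (hf : ∀ i j, N ≤ i + j → f i j = 0) :
    ∑ l ∈ range N, ∑ ij ∈ antidiagonal l, f ij.1 ij.2 =
      ∑ i ∈ range N, ∑ j ∈ range N, f i j := by
  simp only [Nat.sum_antidiagonal_eq_sum_range_succ_mk, sum_range_diag_flip]
  refine sum_congr rfl fun i _ => sum_subset (range_subset_range.mpr (by omega)) fun j _ hj => ?_
  simp only [mem_range, not_lt] at hj
  exact hf i j (by omega)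

namespace MvPowerSeries

variable {σ R : Type*}

theorem eq_on_monomial_of_eq_on_X [CommSemiring R] {M : Type*} [Monoid M]
    (φ ψ : MvPowerSeries σ R →* M) {s : Set σ} (h : ∀ i ∈ s, φ (X i) = ψ (X i))
    {γ : σ →₀ ℕ} (hγ : ↑γ.support ⊆ s) : φ (monomial γ 1) = ψ (monomial γ 1) := by
  induction γ using Finsupp.induction with
  | zero => rw [monomial_zero_one, map_one, map_one]
  | single_add i n γ hi hn ih =>
    rw [Finsupp.support_single_add hi hn, Finset.coe_cons, Set.insert_subset_iff] at hγ
    rw [← mul_one (1 : R), ← monomial_mul_monomial, ← X_pow_eq, map_mul, map_mul, map_pow,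
      map_pow, h i hγ.1, ih hγ.2]

variable [CommRing R]

variable (σ R) in
abbrev coeffSpan : Submodule R (MvPowerSeries σ R →ₗ[R] R) :=
  Submodule.span R (Set.range coeff)

lemma coeff_mem_coeffSpan (γ : σ →₀ ℕ) : coeff γ ∈ coeffSpan σ R :=
  Submodule.subset_span ⟨γ, rfl⟩

lemma eq_of_mem_coeffSpan {F G : MvPowerSeries σ R →ₗ[R] R}
    (hF : F ∈ coeffSpan σ R) (hG : G ∈ coeffSpan σ R) {P : Set (σ →₀ ℕ)}
    (hP : ∀ γ ∈ P, F (monomial γ 1) = G (monomial γ 1)) {c : MvPowerSeries σ R}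
    (hc : ∀ γ ∉ P, coeff γ c = 0) : F c = G c := by
  classical
  obtain ⟨a, ha⟩ := Finsupp.mem_span_range_iff_exists_finsupp.mp (sub_mem hF hG)
  have happly : ∀ x, (F - G) x = ∑ γ ∈ a.support, a γ * coeff γ x := fun x => by
    simp [← ha, Finsupp.sum, LinearMap.sum_apply]
  have hmono : ∀ γ ∈ P, a γ = 0 := fun γ hγ => by
    simpa [coeff_monomial, hP γ hγ, eq_comm] using happly (monomial γ 1)
  rw [← sub_eq_zero, ← LinearMap.sub_apply, happly]
  refine Finset.sum_eq_zero fun γ _ => ?_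
  by_cases hγ : γ ∈ P
  · rw [hmono γ hγ, zero_mul]
  · rw [hc γ hγ, mul_zero]

lemma comp_mem_coeffSpan {T : MvPowerSeries σ R →ₗ[R] MvPowerSeries σ R}
    (hT : ∀ γ, (coeff γ).comp T ∈ coeffSpan σ R) {F : MvPowerSeries σ R →ₗ[R] R}
    (hF : F ∈ coeffSpan σ R) : F.comp T ∈ coeffSpan σ R :=
  (Submodule.map_span_le T.dualMap _ _).mpr (by rintro _ ⟨γ, rfl⟩; exact hT γ)
    (Submodule.mem_map_of_mem hF)

lemma coeff_comp_pow_mem_coeffSpan {T : MvPowerSeries σ R →ₗ[R] MvPowerSeries σ R}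
    (hT : ∀ γ, (coeff γ).comp T ∈ coeffSpan σ R) (l : ℕ) (γ : σ →₀ ℕ) :
    (coeff γ).comp (T ^ l) ∈ coeffSpan σ R := by
  induction l generalizing γ with
  | zero => exact coeff_mem_coeffSpan γ
  | succ l ih =>
    rw [Module.End.iterate_succ, ← LinearMap.comp_assoc]
    exact comp_mem_coeffSpan hT (ih γ)

lemma coeff_comp_mulLeft_mem_coeffSpan (f : MvPowerSeries σ R) (γ : σ →₀ ℕ) :
    (coeff γ).comp (LinearMap.mulLeft R f) ∈ coeffSpan σ R := by
  classical
  have : (coeff γ).comp (LinearMap.mulLeft R f) =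
      ∑ p ∈ antidiagonal γ, coeff p.1 f • coeff p.2 := by
    ext π
    simp [coeff_mul, LinearMap.sum_apply]
  rw [this]
  exact Submodule.sum_mem _ fun p _ => Submodule.smul_mem _ _ (coeff_mem_coeffSpan p.2)

end MvPowerSeries

-- `Dpart (inl (k+1)) = (k+1) z_{k+1} ∂_{z_k}`, indexed like the sum defining `Dzero`.
def Dpart : Var → Derivation ℝ FPS FPS
  | Sum.inl (k + 1) =>
      (monomial (Finsupp.single (Sum.inl (k + 1)) 1) ((k : ℝ) + 1) : FPS) •
        pderiv ℝ (Sum.inl k)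
  | _ => 0

@[simp] lemma Dpart_inl_zero : Dpart (Sum.inl 0) = 0 := rfl

@[simp] lemma Dpart_inr (n : Pos2) : Dpart (Sum.inr n) = 0 := rfl

lemma coeff_Dpart_inl_succ (β : MIdx) (k : ℕ) (π : FPS) :
    coeff β (Dpart (Sum.inl (k + 1)) π) =
      if β (Sum.inl (k + 1)) = 0 then 0 else
        ((k : ℝ) + 1) * ((β (Sum.inl k) : ℝ) + 1) *
          coeff (β + Finsupp.single (Sum.inl k) 1 - Finsupp.single (Sum.inl (k + 1)) 1) π := by
  rw [Dpart, Derivation.smul_apply, smul_eq_mul, coeff_monomial_mul, coeff_pderiv]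
  by_cases h : β (Sum.inl (k + 1)) = 0
  · rw [if_pos h, if_neg (by rw [Finsupp.single_le_iff]; omega)]
  · have hle : Finsupp.single (Sum.inl (k + 1)) 1 ≤ β := Finsupp.single_le_iff.mpr (by omega)
    rw [if_neg h, if_pos hle, tsub_add_eq_add_tsub hle, Finsupp.tsub_apply,
      Finsupp.single_eq_of_ne (by simp), tsub_zero]
    ring

lemma coeff_Dpart_of_eq_zero {β : MIdx} {j : Var} (h : β j = 0) (π : FPS) :
    coeff β (Dpart j π) = 0 := by
  rcases j with (_ | k) | n
  · simp
  · rw [coeff_Dpart_inl_succ, if_pos h]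
  · simp

lemma coeff_Dzero_eq_sum_Dpart {β : MIdx} {S : Finset Var} (hS : β.support ⊆ S) (π : FPS) :
    coeff β (Dzero π) = ∑ j ∈ S, coeff β (Dpart j π) := by
  rw [← Finset.sum_subset hS fun j _ hj =>
    coeff_Dpart_of_eq_zero (Finsupp.notMem_support_iff.mp hj) π]
  refine Finset.sum_congr rfl fun j hj => ?_
  rcases j with (_ | k) | n
  · simp
  · rw [coeff_Dpart_inl_succ, if_neg (Finsupp.mem_support_iff.mp hj)]
  · simp

lemma coeff_Dzero_eq_coeff_sum_Dpart {β : MIdx} {S : Finset Var} (hS : β.support ⊆ S)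
    (π : FPS) : coeff β (Dzero π) = coeff β (∑ j ∈ S, Dpart j π) := by
  rw [map_sum, coeff_Dzero_eq_sum_Dpart hS]

lemma Dzero_add (π σ : FPS) : Dzero (π + σ) = Dzero π + Dzero σ := by
  ext β
  simp only [map_add, coeff_Dzero_eq_sum_Dpart subset_rfl, sum_add_distrib]

lemma Dzero_smul (r : ℝ) (π : FPS) : Dzero (r • π) = r • Dzero π := by
  ext β
  simp only [map_smul, Derivation.map_smul, coeff_Dzero_eq_sum_Dpart subset_rfl, smul_sum]

lemma Dzero_mul (π σ : FPS) : Dzero (π * σ) = π * Dzero σ + σ * Dzero π := by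
  classical
  have hsum : ∀ (τ τ' : FPS) (β : MIdx), coeff β (τ * Dzero τ') =
      coeff β (τ * ∑ j ∈ β.support, Dpart j τ') := fun τ τ' β => by
    rw [coeff_mul, coeff_mul]
    refine sum_congr rfl fun p hp => ?_
    have hle : p.2 ≤ β := (Finset.HasAntidiagonal.mem_antidiagonal.mp hp) ▸ le_add_self
    rw [coeff_Dzero_eq_coeff_sum_Dpart (Finsupp.support_mono hle)]
  ext β
  rw [coeff_Dzero_eq_coeff_sum_Dpart subset_rfl, map_add, hsum, hsum]
  simp only [Derivation.leibniz, smul_eq_mul, sum_add_distrib, mul_sum, map_add]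

def Dzero.toDerivation : Derivation ℝ FPS FPS :=
  Derivation.mk' ⟨⟨Dzero, Dzero_add⟩, Dzero_smul⟩ Dzero_mul

@[simp] lemma Dzero.coe_toDerivation : ⇑Dzero.toDerivation = Dzero := rfl

def kWeight : Var → ℕ := Sum.elim id fun _ => 0

@[simp] lemma kWeight_inl (k : ℕ) : kWeight (Sum.inl k) = k := rfl

lemma weight_add_single_sub_single_s17 {β : MIdx} {k : ℕ} (h : β (Sum.inl (k + 1)) ≠ 0) :
    Finsupp.weight kWeight
      (β + Finsupp.single (Sum.inl k) 1 - Finsupp.single (Sum.inl (k + 1)) 1) + 1 =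
        Finsupp.weight kWeight β := by
  have hle : Finsupp.single (Sum.inl (k + 1)) 1 ≤ β + Finsupp.single (Sum.inl k) 1 :=
    (Finsupp.single_le_iff.mpr (by omega)).trans le_self_add
  have := congrArg (Finsupp.weight kWeight) (tsub_add_cancel_of_le hle)
  simp only [map_add, Finsupp.weight_single, kWeight_inl, smul_eq_mul, one_mul] at this
  omega

lemma le_weightedOrder_Dzero (π : FPS) :
    weightedOrder kWeight π + 1 ≤ weightedOrder kWeight (Dzero π) := by
  refine le_weightedOrder _ fun d hd => ?_
  rw [coeff_Dzero_eq_sum_Dpart subset_rfl]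
  refine sum_eq_zero fun j hj => ?_
  rcases j with (_ | k) | n
  · simp
  · rw [coeff_Dpart_inl_succ, if_neg (Finsupp.mem_support_iff.mp hj),
      coeff_eq_zero_of_lt_weightedOrder kWeight, mul_zero]
    rw [← weight_add_single_sub_single_s17 (Finsupp.mem_support_iff.mp hj)] at hd
    exact_mod_cast (ENat.add_lt_add_iff_right ENat.one_ne_top).mp hd
  · simp

lemma natCast_le_weightedOrder_iterate_Dzero (l : ℕ) (π : FPS) :
    (l : ℕ∞) ≤ weightedOrder kWeight (Dzero^[l] π) := by
  induction l with
  | zero => simp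
  | succ l ih =>
    calc ((l + 1 : ℕ) : ℕ∞) = l + 1 := by push_cast; rfl
      _ ≤ weightedOrder kWeight (Dzero^[l] π) + 1 := add_le_add_left ih 1
      _ ≤ weightedOrder kWeight (Dzero^[l + 1] π) := by
        rw [Function.iterate_succ_apply']
        exact le_weightedOrder_Dzero _

lemma natCast_le_weightedOrder_pow_mul_iterate_Dzero (q : FPS) (l : ℕ) (π : FPS) :
    (l : ℕ∞) ≤ weightedOrder kWeight (q ^ l * Dzero^[l] π) :=
  calc (l : ℕ∞) ≤ weightedOrder kWeight (q ^ l) + weightedOrder kWeight (Dzero^[l] π) :=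
        le_add_left (natCast_le_weightedOrder_iterate_Dzero l π)
    _ ≤ weightedOrder kWeight (q ^ l * Dzero^[l] π) := le_weightedOrder_mul _

lemma coeff_pow_mul_iterate_Dzero_eq_zero (q π : FPS) {β : MIdx} {l : ℕ}
    (h : Finsupp.weight kWeight β < l) : coeff β (q ^ l * Dzero^[l] π) = 0 :=
  coeff_eq_zero_of_lt_weightedOrder kWeight <|
    (Nat.cast_lt.mpr h).trans_le (natCast_le_weightedOrder_pow_mul_iterate_Dzero q l π)

def expTerm (q : FPS) (l : ℕ) (π : FPS) : FPS :=
  (l.factorial : ℝ)⁻¹ • (q ^ l * Dzero^[l] π)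

lemma coeff_expTerm (q : FPS) (l : ℕ) (π : FPS) (β : MIdx) :
    coeff β (expTerm q l π) = (l.factorial : ℝ)⁻¹ * coeff β (q ^ l * Dzero^[l] π) :=
  map_smul _ _ _

lemma natCast_le_weightedOrder_expTerm (q : FPS) (l : ℕ) (π : FPS) :
    (l : ℕ∞) ≤ weightedOrder kWeight (expTerm q l π) :=
  (natCast_le_weightedOrder_pow_mul_iterate_Dzero q l π).trans (le_weightedOrder_smul _)

lemma coeff_expTerm_mul_expTerm_eq_zero (q π σ : FPS) {β : MIdx} {i j : ℕ}
    (h : Finsupp.weight kWeight β < i + j) :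
    coeff β (expTerm q i π * expTerm q j σ) = 0 := by
  refine coeff_eq_zero_of_lt_weightedOrder kWeight ?_
  calc (Finsupp.weight kWeight β : ℕ∞) < i + j := by exact_mod_cast h
    _ ≤ _ := add_le_add (natCast_le_weightedOrder_expTerm q i π)
          (natCast_le_weightedOrder_expTerm q j σ)
    _ ≤ _ := le_weightedOrder_mul _

lemma coeff_expTerm_eq_zero (q π : FPS) {β : MIdx} {l : ℕ}
    (h : Finsupp.weight kWeight β < l) : coeff β (expTerm q l π) = 0 := by
  rw [coeff_expTerm, coeff_pow_mul_iterate_Dzero_eq_zero q π h, mul_zero]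

def expD (q π : FPS) : FPS := fun β => ∑ᶠ l : ℕ, coeff β (expTerm q l π)

lemma coeff_expD (q π : FPS) {β : MIdx} {N : ℕ} (hN : Finsupp.weight kWeight β < N) :
    coeff β (expD q π) = ∑ l ∈ range N, coeff β (expTerm q l π) := by
  refine finsum_eq_sum_of_support_subset _ fun l hl => ?_
  by_contra h
  simp only [coe_range, Set.mem_Iio, not_lt] at h
  exact hl (coeff_expTerm_eq_zero q π (by omega))

lemma expTerm_mul (q : FPS) (l : ℕ) (π σ : FPS) :
    expTerm q l (π * σ) = ∑ ij ∈ antidiagonal l, expTerm q ij.1 π * expTerm q ij.2 σ := by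
  rw [expTerm, ← Dzero.coe_toDerivation, Dzero.toDerivation.iterate_apply_mul, mul_sum,
    smul_sum]
  refine sum_congr rfl fun ij hij => ?_
  obtain ⟨i, j⟩ := ij
  obtain rfl : i + j = l := mem_antidiagonal.mp hij
  have hfact : ((i + j).factorial : ℝ)⁻¹ * (i + j).choose i =
      (i.factorial : ℝ)⁻¹ * (j.factorial : ℝ)⁻¹ := by
    have := Nat.choose_mul_factorial_mul_factorial (Nat.le_add_right i j)
    rw [Nat.add_sub_cancel_left] at this
    field_simp
    exact_mod_cast this
  simp only [expTerm, Dzero.coe_toDerivation, ← Nat.cast_smul_eq_nsmul ℝ, mul_smul_comm,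
    smul_smul, pow_add, hfact]
  rw [smul_mul_assoc, smul_smul, mul_comm (j.factorial : ℝ)⁻¹]
  congr 1
  ring

lemma expD_mul (q π σ : FPS) : expD q (π * σ) = expD q π * expD q σ := by
  classical
  ext β
  obtain ⟨N, hN⟩ := exists_gt (Finsupp.weight kWeight β)
  have hle : ∀ p ∈ antidiagonal β,
      Finsupp.weight kWeight p.1 < N ∧ Finsupp.weight kWeight p.2 < N := by
    intro p hp
    have := congrArg (Finsupp.weight kWeight) (mem_antidiagonal.mp hp)
    rw [map_add] at this
    omega
  calc coeff β (expD q (π * σ))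
      = ∑ l ∈ range N, ∑ ij ∈ antidiagonal l,
          coeff β (expTerm q ij.1 π * expTerm q ij.2 σ) := by
        simp only [coeff_expD q _ hN, expTerm_mul, map_sum]
    _ = ∑ i ∈ range N, ∑ j ∈ range N, coeff β (expTerm q i π * expTerm q j σ) :=
        Finset.sum_range_sum_antidiagonal_eq_sum_range_sum_range N
          (fun i j => coeff β (expTerm q i π * expTerm q j σ)) fun i j h =>
          coeff_expTerm_mul_expTerm_eq_zero q π σ (by omega)
    _ = coeff β (expD q π * expD q σ) := by
        symm
        rw [coeff_mul, sum_congr rfl fun p hp => by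
          rw [coeff_expD q π (hle p hp).1, coeff_expD q σ (hle p hp).2, sum_mul_sum], sum_comm]
        refine sum_congr rfl fun i _ => ?_
        rw [sum_comm]
        exact sum_congr rfl fun j _ => (coeff_mul _ _ _).symm

lemma Dpart_zk (j : Var) (k : ℕ) :
    Dpart j (zk k) = if j = Sum.inl (k + 1) then ((k : ℝ) + 1) • zk (k + 1) else 0 := by
  rcases j with (_ | m) | n
  · simp
  · by_cases h : m = k
    · subst h
      rw [if_pos rfl, Dpart, Derivation.smul_apply, zk, pderiv_X_self, smul_eq_mul, mul_one,
        zk, X_def, ← map_smul, smul_eq_mul, mul_one]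
    · rw [if_neg (by simpa using h), Dpart, Derivation.smul_apply, zk,
        pderiv_X_of_ne (by simpa [eq_comm] using h), smul_zero]
  · simp

lemma Dzero_zk (k : ℕ) : Dzero (zk k) = ((k : ℝ) + 1) • zk (k + 1) := by
  classical
  ext β
  rw [coeff_Dzero_eq_coeff_sum_Dpart (subset_union_left (s₂ := {Sum.inl (k + 1)})),
    sum_congr rfl fun j _ => Dpart_zk j k, sum_ite_eq', if_pos (by simp)]

lemma iterate_Dzero_zk (k l : ℕ) :
    Dzero^[l] (zk k) = ((k + l).descFactorial l : ℝ) • zk (k + l) := by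
  induction l with
  | zero => simp
  | succ l ih =>
    rw [Function.iterate_succ_apply', ih, Dzero_smul, Dzero_zk, smul_smul,
      ← add_assoc, Nat.succ_descFactorial_succ]
    push_cast
    ring_nf

lemma expTerm_zk (q : FPS) (k l : ℕ) :
    expTerm q l (zk k) = ((k + l).choose k : ℝ) • (q ^ l * zk (k + l)) := by
  rw [expTerm, iterate_Dzero_zk, mul_smul_comm, smul_smul,
    Nat.descFactorial_eq_factorial_mul_choose, Nat.choose_symm_add]
  congr 1
  push_cast
  field_simp

lemma expD_zk (q : FPS) (k : ℕ) : expD q (zk k) = gammaZk q k := by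
  ext β
  exact finsum_congr fun l => by rw [expTerm_zk, map_smul, smul_eq_mul]

lemma iterate_Dzero_one {l : ℕ} (hl : l ≠ 0) : Dzero^[l] 1 = 0 := by
  obtain ⟨m, rfl⟩ := Nat.exists_eq_succ_of_ne_zero hl
  rw [Function.iterate_succ_apply, ← Dzero.coe_toDerivation, Dzero.toDerivation.map_one_eq_zero]
  exact Function.iterate_fixed Dzero.toDerivation.map_zero m

lemma expD_one (q : FPS) : expD q 1 = 1 := by
  ext β
  refine (finsum_eq_single _ 0 fun l hl => ?_).trans (by simp [expTerm])
  rw [expTerm, iterate_Dzero_one hl, mul_zero, smul_zero, map_zero]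

lemma coeff_comp_Dpart_mem_coeffSpan (γ : MIdx) (j : Var) :
    (coeff γ).comp (Dpart j : FPS →ₗ[ℝ] FPS) ∈ coeffSpan Var ℝ := by
  rcases j with (_ | k) | n
  · simp
  · by_cases h : γ (Sum.inl (k + 1)) = 0
    · convert zero_mem (coeffSpan Var ℝ)
      ext π
      simp [coeff_Dpart_inl_succ, h]
    · convert Submodule.smul_mem _ (((k : ℝ) + 1) * ((γ (Sum.inl k) : ℝ) + 1))
        (coeff_mem_coeffSpan
          (γ + Finsupp.single (Sum.inl k) 1 - Finsupp.single (Sum.inl (k + 1)) 1))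
      ext π
      simp [coeff_Dpart_inl_succ, h]
  · simp

lemma coeff_comp_Dzero_mem_coeffSpan (γ : MIdx) :
    (coeff γ).comp (Dzero.toDerivation : FPS →ₗ[ℝ] FPS) ∈ coeffSpan Var ℝ := by
  have : (coeff γ).comp (Dzero.toDerivation : FPS →ₗ[ℝ] FPS) =
      ∑ j ∈ γ.support, (coeff γ).comp (Dpart j : FPS →ₗ[ℝ] FPS) := by
    ext π
    simp [LinearMap.sum_apply, coeff_Dzero_eq_sum_Dpart subset_rfl]
  rw [this]
  exact Submodule.sum_mem _ fun j _ => coeff_comp_Dpart_mem_coeffSpan γ j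

lemma exists_mem_coeffSpan_eq_coeff_expD (q : FPS) (β : MIdx) :
    ∃ F ∈ coeffSpan Var ℝ, ∀ π, F π = coeff β (expD q π) := by
  refine ⟨∑ l ∈ range (Finsupp.weight kWeight β + 1), (l.factorial : ℝ)⁻¹ •
      ((coeff β).comp (LinearMap.mulLeft ℝ (q ^ l))).comp
        ((Dzero.toDerivation : FPS →ₗ[ℝ] FPS) ^ l),
    Submodule.sum_mem _ fun l _ => Submodule.smul_mem _ _ (comp_mem_coeffSpan
      (coeff_comp_pow_mem_coeffSpan coeff_comp_Dzero_mem_coeffSpan l)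
      (coeff_comp_mulLeft_mem_coeffSpan _ _)), fun π => ?_⟩
  rw [coeff_expD q π (lt_add_one _)]
  simp [LinearMap.sum_apply, expTerm, Module.End.pow_apply]

lemma exists_mem_coeffSpan_eq_coeff_applyG {Γ : MIdx → MIdx → ℝ} (hrow : RowFinite Γ)
    (β : MIdx) : ∃ F ∈ coeffSpan Var ℝ, ∀ π, F π = coeff β (applyG Γ π) := by
  have hfin : {γ | Γ β γ ≠ 0}.Finite := hrow β
  refine ⟨∑ γ ∈ hfin.toFinset, Γ β γ • coeff γ,
    Submodule.sum_mem _ fun γ _ => Submodule.smul_mem _ _ (coeff_mem_coeffSpan γ),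
    fun π => ?_⟩
  simp only [LinearMap.sum_apply, LinearMap.smul_apply, smul_eq_mul]
  refine (finsum_eq_sum_of_support_subset _ fun γ hγ => ?_).symm
  simpa using left_ne_zero_of_mul hγ

lemma support_subset_range_inl {γ : MIdx} (h : ∀ n, γ (Sum.inr n) = 0) :
    (γ.support : Set Var) ⊆ Set.range Sum.inl := by
  intro j hj
  rcases j with k | n
  · exact ⟨k, rfl⟩
  · exact absurd (h n) (Finsupp.mem_support_iff.mp hj)

/-- Exponential formula on the subalgebra ℝ[[z_k]] (second item of (cw27)/(cw35)):
if a row-finite unital algebra endomorphism `Γ*` satisfies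
`Γ* z_k = Σ_l (k+l choose k) q^l z_{k+l}`, then for every `c ∈ ℝ[[z_k]]` the sum
`Σ_l (1/l!) q^l (D⁽⁰⁾)^l c` is componentwise finite and equals `Γ* c`. -/
theorem stmt_17 (q : FPS) (Γ : MIdx → MIdx → ℝ) (hrow : RowFinite Γ)
    (hmul : ∀ π π' : FPS, applyG Γ (π * π') = applyG Γ π * applyG Γ π')
    (hone : applyG Γ 1 = 1)
    (hzk : ∀ k : ℕ, applyG Γ (zk k) = gammaZk q k)
    (c : FPS) (hc : OnlyZk c) :
    (∀ β : MIdx, {l : ℕ | MvPowerSeries.coeff (R := ℝ) β (q ^ l * Dzero^[l] c) ≠ 0}.Finite) ∧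
    ∀ β : MIdx, MvPowerSeries.coeff (R := ℝ) β (applyG Γ c)
      = ∑ᶠ l : ℕ, ((l.factorial : ℝ))⁻¹ * MvPowerSeries.coeff (R := ℝ) β (q ^ l * Dzero^[l] c) := by
  refine ⟨fun β => (Set.finite_Iic (Finsupp.weight kWeight β)).subset fun l hl => ?_, fun β => ?_⟩
  · by_contra h
    exact hl (coeff_pow_mul_iterate_Dzero_eq_zero q c (not_le.mp h))
  let φ : FPS →* FPS := ⟨⟨applyG Γ, hone⟩, hmul⟩
  let ψ : FPS →* FPS := ⟨⟨expD q, expD_one q⟩, expD_mul q⟩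
  have hX : ∀ i ∈ Set.range Sum.inl, φ (X i) = ψ (X i) := by
    rintro _ ⟨k, rfl⟩
    exact (hzk k).trans (expD_zk q k).symm
  obtain ⟨F, hF, hFΓ⟩ := exists_mem_coeffSpan_eq_coeff_applyG hrow β
  obtain ⟨G, hG, hGE⟩ := exists_mem_coeffSpan_eq_coeff_expD q β
  have hFG : F c = G c := eq_of_mem_coeffSpan hF hG (P := {γ | ∀ n, γ (Sum.inr n) = 0})
    (fun γ hγ => by
      rw [hFΓ, hGE]
      exact congrArg (coeff β) (eq_on_monomial_of_eq_on_X φ ψ hX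
        (support_subset_range_inl hγ)))
    fun γ hγ => hc γ (not_forall.mp hγ)
  rw [← hFΓ, hFG, hGE]
  exact finsum_congr fun l => coeff_expTerm q l c β
end
end
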